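/- arXiv:1501.03275 — 3 statements merged into one kernel-verified Lean document; each statement's English description precedes it below -/
import Mathlib

section
/- Suppose f − 1 = λm and let χ be a multiplicative character of order m on F_q. Then H_{q,m} is a (q, f, λ)-difference set in F_q if and only if Σ_{α ∈ H_{q,m}} χ^s(1 − α) = 0 for every s = 1, ..., m − 1. -/
/-!
Let `H` be the nonzero `m`-th powers and `N(a)` the number of pairs `(x, y) ∈ H × H` with
`x - y = a`. Substituting `x = y β` gives `∑ₐ χˢ(a) N(a) = |H| χˢ(-1) ∑_{α ∈ H} χˢ(1 - α)`.
If `N ≡ λ` off `0`, the left side is `λ ∑ₐ χˢ(a) = 0` for the nontrivial characters `χˢ`.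
Conversely, `H` is the kernel of `χ` on `Fˣ`, so `∑_{s < m} χˢ` is `m` times the indicator of
`H`; as `N` is constant on cosets of `H`, inverting leaves only the `s = 0` term:
`m |H| N(a) = |H| (|H| - 1)`.
-/

/-- `D` is a `(q, k, l)`-difference set in the additive group `F` (with `q = |F|`):
`|D| = k` and each nonzero `a` has exactly `l` ordered pairs `(x, y) ∈ D × D` with
`x - y = a`. -/
def IsDiffSet {F : Type*} [AddGroup F] (D : Set F) (k l : ℕ) : Prop :=
  D.ncard = k ∧
    ∀ a : F, a ≠ 0 → {x : F × F | x.1 ∈ D ∧ x.2 ∈ D ∧ x.1 - x.2 = a}.ncard = l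

/-- The set of nonzero `m`-th powers in `F`. -/
def Hset (F : Type*) [Field F] (m : ℕ) : Set F :=
  {x : F | x ≠ 0 ∧ ∃ y : F, y ^ m = x}

open Finset

section Hset

variable {F : Type*} [Field F] {m : ℕ}

lemma one_mem_Hset : (1 : F) ∈ Hset F m :=
  ⟨one_ne_zero, 1, one_pow m⟩

lemma mul_mem_Hset {a b : F} (ha : a ∈ Hset F m) (hb : b ∈ Hset F m) : a * b ∈ Hset F m := by
  obtain ⟨ha0, y, rfl⟩ := ha
  obtain ⟨hb0, z, rfl⟩ := hb
  exact ⟨mul_ne_zero ha0 hb0, y * z, mul_pow y z m⟩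

lemma inv_mem_Hset {a : F} (ha : a ∈ Hset F m) : a⁻¹ ∈ Hset F m := by
  obtain ⟨ha0, y, rfl⟩ := ha
  exact ⟨inv_ne_zero ha0, y⁻¹, inv_pow y m⟩

lemma mul_mem_Hset_iff {c x : F} (hc : c ∈ Hset F m) : c * x ∈ Hset F m ↔ x ∈ Hset F m := by
  refine ⟨fun h => ?_, mul_mem_Hset hc⟩
  simpa [inv_mul_cancel_left₀ hc.1] using mul_mem_Hset (inv_mem_Hset hc) h

lemma Hset_eq_image_range_powMonoidHom (hm : m ≠ 0) :
    Hset F m = Units.val '' ((powMonoidHom m : Fˣ →* Fˣ).range : Set Fˣ) := by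
  ext x
  constructor
  · rintro ⟨hx, y, rfl⟩
    have hy : y ≠ 0 := ne_zero_pow hm hx
    exact ⟨Units.mk0 y hy ^ m, ⟨Units.mk0 y hy, rfl⟩, by simp⟩
  · rintro ⟨_, ⟨u, rfl⟩, rfl⟩
    exact ⟨(u ^ m).ne_zero, u, by simp⟩

lemma ncard_Hset [Fintype F] {f : ℕ} (hm : 0 < m) (hcard : Fintype.card F = m * f + 1) :
    (Hset F m).ncard = f := by
  classical
  rw [Hset_eq_image_range_powMonoidHom hm.ne', Set.ncard_image_of_injective _ Units.val_injective,
    ← Nat.card_coe_set_eq, SetLike.coe_sort_coe, IsCyclic.card_powMonoidHom_range,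
    Nat.card_eq_fintype_card, Fintype.card_units, hcard, Nat.add_sub_cancel, Nat.gcd_mul_right_left,
    Nat.mul_div_cancel_left f hm]

end Hset

section Hfinset

variable (F : Type*) [Field F] [Finite F] (m : ℕ)

noncomputable def Hfinset : Finset F := (Set.toFinite (Hset F m)).toFinset

variable {F m}

@[simp]
lemma mem_Hfinset {x : F} : x ∈ Hfinset F m ↔ x ∈ Hset F m :=
  Set.Finite.mem_toFinset _

@[simp]
lemma coe_Hfinset : (Hfinset F m : Set F) = Hset F m :=
  Set.Finite.coe_toFinset _

lemma card_Hfinset [Fintype F] {f : ℕ} (hm : 0 < m) (hcard : Fintype.card F = m * f + 1) :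
    #(Hfinset F m) = f := by
  rw [← ncard_Hset hm hcard, ← coe_Hfinset, Set.ncard_coe_finset]

lemma mul_mem_Hfinset_iff {c x : F} (hc : c ∈ Hset F m) :
    c * x ∈ Hfinset F m ↔ x ∈ Hfinset F m := by
  simp only [mem_Hfinset, mul_mem_Hset_iff hc]

end Hfinset

lemma Finset.sum_comp_mul_left_of_mul_mem_iff {K M : Type*} [GroupWithZero K] [AddCommMonoid M]
    {D : Finset K} {c : K} (hc : c ≠ 0) (hD : ∀ x, c * x ∈ D ↔ x ∈ D) (g : K → M) :
    ∑ x ∈ D, g (c * x) = ∑ x ∈ D, g x :=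
  Finset.sum_nbij' (c * ·) (c⁻¹ * ·) (fun x hx => (hD x).2 hx)
    (fun x hx => (hD _).1 (by simpa [mul_inv_cancel_left₀ hc] using hx))
    (fun x _ => inv_mul_cancel_left₀ hc x) (fun x _ => mul_inv_cancel_left₀ hc x) (fun _ _ => rfl)

section DiffCount

variable {G : Type*} [AddGroup G] [DecidableEq G]

def diffCount (D : Finset G) (a : G) : ℕ := #{x ∈ D ×ˢ D | x.1 - x.2 = a}

lemma isDiffSet_coe_iff (D : Finset G) (k l : ℕ) :
    IsDiffSet (D : Set G) k l ↔ #D = k ∧ ∀ a, a ≠ 0 → diffCount D a = l := by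
  have hpairs (a : G) :
      {x : G × G | x.1 ∈ (D : Set G) ∧ x.2 ∈ (D : Set G) ∧ x.1 - x.2 = a} =
        ↑({x ∈ D ×ˢ D | x.1 - x.2 = a} : Finset (G × G)) := by
    ext x
    simp [and_assoc]
  simp only [IsDiffSet, Set.ncard_coe_finset, hpairs, diffCount]

lemma diffCount_eq_sum (D : Finset G) (a : G) :
    diffCount D a = ∑ x ∈ D, ∑ y ∈ D, if x - y = a then 1 else 0 := by
  rw [diffCount, card_filter, sum_product]

lemma sum_mul_diffCount [Fintype G] {R : Type*} [CommSemiring R] (D : Finset G) (ψ : G → R) :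
    ∑ a, ψ a * diffCount D a = ∑ x ∈ D, ∑ y ∈ D, ψ (x - y) := by
  simp only [diffCount_eq_sum, Nat.cast_sum, Nat.cast_ite, Nat.cast_one, Nat.cast_zero,
    mul_sum, mul_ite, mul_one, mul_zero]
  rw [sum_comm]
  refine sum_congr rfl fun x _ => ?_
  rw [sum_comm]
  simp

end DiffCount

lemma diffCount_mul_left {K : Type*} [Field K] [DecidableEq K] {D : Finset K} {c : K}
    (hc : c ≠ 0) (hD : ∀ x, c * x ∈ D ↔ x ∈ D) (a : K) : diffCount D (c * a) = diffCount D a := by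
  simp only [diffCount_eq_sum]
  rw [← sum_comp_mul_left_of_mul_mem_iff hc hD]
  refine sum_congr rfl fun x _ => ?_
  rw [← sum_comp_mul_left_of_mul_mem_iff hc hD]
  simp [← mul_sub, hc]

namespace MulChar

variable {F : Type*} [Field F] {R : Type*} [CommRing R] {m : ℕ}

lemma apply_eq_one_of_mem_Hset {ψ : MulChar F R} (hψ : ψ ^ m = 1) {a : F} (ha : a ∈ Hset F m) :
    ψ a = 1 := by
  obtain ⟨ha0, y, rfl⟩ := ha
  rcases eq_or_ne m 0 with rfl | hm
  · simp
  have hy : IsUnit y := isUnit_iff_ne_zero.mpr (ne_zero_pow hm ha0)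
  rw [map_pow, ← hy.unit_spec, ← pow_apply_coe, hψ, one_apply_coe]

lemma orderOf_apply_generator (χ : MulChar F R) {g : Fˣ} (hg : ∀ x, x ∈ Subgroup.zpowers g) :
    orderOf (χ g) = orderOf χ :=
  orderOf_eq_orderOf_iff.mpr fun n => by
    rw [eq_iff hg, pow_apply_coe, one_apply_coe]

lemma mem_Hset_of_apply_eq_one [Finite F] {χ : MulChar F R} (hχ : orderOf χ = m) {x : F}
    (hx : x ≠ 0) (h : χ x = 1) : x ∈ Hset F m := by
  obtain ⟨g, hg⟩ := IsCyclic.exists_generator (α := Fˣ)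
  obtain ⟨k, hk⟩ :=
    (Submonoid.mem_powers_iff _ g).mp (mem_powers_iff_mem_zpowers.mpr (hg (.mk0 x hx)))
  have hxk : x = (g : F) ^ k := by simpa using congrArg Units.val hk.symm
  have hmk : m ∣ k := by
    rw [← hχ, ← orderOf_apply_generator χ hg]
    exact orderOf_dvd_of_pow_eq_one (by rw [← map_pow, ← hxk, h])
  obtain ⟨j, rfl⟩ := hmk
  exact ⟨hx, (g : F) ^ j, by rw [hxk, ← pow_mul, mul_comm]⟩

open scoped Classical in
lemma sum_range_pow_apply [Finite F] [IsDomain R] {χ : MulChar F R} (hχ : orderOf χ = m)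
    (x : F) :
    ∑ s ∈ range m, (χ ^ s) x = if x ∈ Hset F m then (m : R) else 0 := by
  have hχm : χ ^ m = 1 := hχ ▸ pow_orderOf_eq_one χ
  by_cases hx : x = 0
  · subst hx
    simp [Hset]
  split_ifs with hxH
  · have hpow (s : ℕ) : (χ ^ s) ^ m = 1 := by rw [pow_right_comm, hχm, one_pow]
    simp [apply_eq_one_of_mem_Hset (hpow _) hxH]
  · have hx1 : χ x ≠ 1 := fun h => hxH (mem_Hset_of_apply_eq_one hχ hx h)
    have hu : IsUnit x := isUnit_iff_ne_zero.mpr hx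
    have hgeom := geom_sum_mul (χ x) m
    rw [← hu.unit_spec, ← pow_apply_coe, hχm, one_apply_coe, sub_self] at hgeom
    rw [← hu.unit_spec]
    simp_rw [pow_apply_coe]
    exact (mul_eq_zero.mp hgeom).resolve_right (sub_ne_zero.mpr (by simpa using hx1))

end MulChar

lemma sum_one_apply_one_sub_add_one {F R : Type*} [Field F] [DecidableEq F] [CommRing R]
    [Nontrivial R] {D : Finset F} (h1 : 1 ∈ D) :
    ∑ α ∈ D, (1 : MulChar F R) (1 - α) + 1 = #D := by
  have hunit : ∀ α ∈ D.erase 1, (1 : MulChar F R) (1 - α) = 1 := fun α hα =>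
    MulChar.one_apply (isUnit_iff_ne_zero.mpr (sub_ne_zero.mpr (ne_of_mem_erase hα).symm))
  rw [← add_sum_erase _ _ h1, sub_self, MulChar.map_zero, zero_add, sum_congr rfl hunit,
    sum_const, nsmul_one, ← Nat.cast_add_one, card_erase_add_one h1]

section CharacterSums

variable {F : Type*} [Field F] [Fintype F] {R : Type*} [CommRing R] {m : ℕ}

lemma sum_apply_sub_of_mem_Hset {ψ : MulChar F R} (hψ : ψ ^ m = 1) {y : F} (hy : y ∈ Hset F m) :
    ∑ x ∈ Hfinset F m, ψ (x - y) = ψ (-1) * ∑ α ∈ Hfinset F m, ψ (1 - α) := by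
  rw [← sum_comp_mul_left_of_mul_mem_iff hy.1 fun x => mul_mem_Hfinset_iff hy, mul_sum]
  refine sum_congr rfl fun β _ => ?_
  rw [show y * β - y = -1 * (1 - β) * y by ring, map_mul, map_mul,
    MulChar.apply_eq_one_of_mem_Hset hψ hy, mul_one]

lemma sum_mul_diffCount_Hfinset [DecidableEq F] {ψ : MulChar F R} (hψ : ψ ^ m = 1) :
    ∑ a, ψ a * diffCount (Hfinset F m) a =
      #(Hfinset F m) * (ψ (-1) * ∑ α ∈ Hfinset F m, ψ (1 - α)) := by
  rw [sum_mul_diffCount, sum_comm,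
    sum_congr rfl fun y hy => sum_apply_sub_of_mem_Hset hψ (mem_Hfinset.mp hy), sum_const,
    nsmul_eq_mul]

lemma sum_range_pow_apply_inv_mul_sum [IsDomain R] {χ : MulChar F R} (hχ : orderOf χ = m)
    {a : F} (ha : a ≠ 0) (N : F → R) :
    ∑ s ∈ range m, (χ ^ s) a⁻¹ * ∑ b, (χ ^ s) b * N b = m * ∑ c ∈ Hfinset F m, N (c * a) := by
  classical
  calc ∑ s ∈ range m, (χ ^ s) a⁻¹ * ∑ b, (χ ^ s) b * N b
      = ∑ b, (∑ s ∈ range m, (χ ^ s) (b * a⁻¹)) * N b := by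
        simp only [mul_sum, sum_mul, map_mul]
        rw [sum_comm]
        exact sum_congr rfl fun _ _ => sum_congr rfl fun _ _ => by ring
    _ = ∑ b, (if b * a⁻¹ ∈ Hset F m then (m : R) else 0) * N b := by
        simp_rw [MulChar.sum_range_pow_apply hχ]
    _ = ∑ c, if c ∈ Hset F m then (m : R) * N (c * a) else 0 := by
        rw [← Equiv.sum_comp (Equiv.mulRight₀ a ha)]
        simp [mul_inv_cancel_right₀ ha]
    _ = m * ∑ c ∈ Hfinset F m, N (c * a) := by
        rw [← sum_filter, mul_sum]
        exact sum_congr (by ext; simp) fun _ _ => rfl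

end CharacterSums

section DiffSet

variable {F : Type*} [Field F] [Fintype F] [DecidableEq F]
  {R : Type*} [CommRing R] [IsDomain R] [CharZero R] {m l : ℕ}

lemma sum_apply_one_sub_eq_zero_of_diffCount_eq {ψ : MulChar F R} (hψ : ψ ^ m = 1)
    (hψ1 : ψ ≠ 1) (hN : ∀ a, a ≠ 0 → diffCount (Hfinset F m) a = l) :
    ∑ α ∈ Hfinset F m, ψ (1 - α) = 0 := by
  have hS : ∑ a, ψ a * diffCount (Hfinset F m) a = 0 := by
    calc ∑ a, ψ a * diffCount (Hfinset F m) a = ∑ a, ψ a * l := by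
          refine sum_congr rfl fun a _ => ?_
          rcases eq_or_ne a 0 with rfl | ha
          · rw [MulChar.map_zero, zero_mul, zero_mul]
          · rw [hN a ha]
      _ = 0 := by rw [← sum_mul, MulChar.sum_eq_zero_of_ne_one hψ1, zero_mul]
  have hcard : (#(Hfinset F m) : R) ≠ 0 :=
    Nat.cast_ne_zero.mpr (card_ne_zero_of_mem (mem_Hfinset.mpr one_mem_Hset))
  have hneg : ψ (-1) ≠ 0 := (isUnit_one.neg.map ψ).ne_zero
  simpa [sum_mul_diffCount_Hfinset hψ, hcard, hneg] using hS

lemma diffCount_mul_add_one_eq_card {χ : MulChar F R} (hχ : orderOf χ = m)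
    (hT : ∀ s, 0 < s → s < m → ∑ α ∈ Hfinset F m, (χ ^ s) (1 - α) = 0) {a : F} (ha : a ≠ 0) :
    diffCount (Hfinset F m) a * m + 1 = #(Hfinset F m) := by
  set H := Hfinset F m with hH
  have hm : 0 < m := hχ ▸ χ.orderOf_pos
  have hχm : χ ^ m = 1 := hχ ▸ pow_orderOf_eq_one χ
  have hpow (s : ℕ) : (χ ^ s) ^ m = 1 := by rw [pow_right_comm, hχm, one_pow]
  have havg : ∑ c ∈ H, (diffCount H (c * a) : R) = #H * diffCount H a := by
    rw [← nsmul_eq_mul, ← sum_const]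
    refine sum_congr rfl fun c hc => ?_
    have hcH := mem_Hfinset.mp hc
    rw [diffCount_mul_left hcH.1 fun x => mul_mem_Hfinset_iff hcH]
  have hvanish : ∀ s ∈ range m, s ≠ 0 →
      (χ ^ s) a⁻¹ * ∑ b, (χ ^ s) b * (diffCount H b : R) = 0 := fun s hs hs0 => by
    rw [sum_mul_diffCount_Hfinset (hpow s), hT s (Nat.pos_of_ne_zero hs0) (mem_range.mp hs),
      mul_zero, mul_zero, mul_zero]
  have hT0 := sum_one_apply_one_sub_add_one (R := R) (D := H) (mem_Hfinset.mpr one_mem_Hset)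
  have key := sum_range_pow_apply_inv_mul_sum hχ ha (fun b => (diffCount H b : R))
  rw [sum_eq_single_of_mem 0 (mem_range.mpr hm) hvanish, sum_mul_diffCount_Hfinset (hpow 0),
    havg, pow_zero, MulChar.one_apply isUnit_one.neg,
    MulChar.one_apply (isUnit_iff_ne_zero.mpr (inv_ne_zero ha)), one_mul, one_mul,
    eq_sub_of_add_eq hT0, ← hH] at key
  have hcard : (#H : R) ≠ 0 :=
    Nat.cast_ne_zero.mpr (card_ne_zero_of_mem (mem_Hfinset.mpr one_mem_Hset))
  have hcount := mul_left_cancel₀ hcard (key.trans (mul_left_comm _ _ _))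
  exact_mod_cast (by linear_combination -hcount : (diffCount H a * m + 1 : R) = #H)

end DiffSet

theorem stmt0_general (m f l : ℕ) (hm : 0 < m)
    (F : Type*) [Field F] [Fintype F]
    (hcard : Fintype.card F = m * f + 1)
    (hlf : f - 1 = l * m)
    (χ : MulChar F ℂ) (hχ : orderOf χ = m) :
    IsDiffSet (Hset F m) f l ↔
      ∀ s : ℕ, 1 ≤ s → s ≤ m - 1 →
        ∑ α ∈ (Set.toFinite (Hset F m)).toFinset, (χ ^ s) (1 - α) = 0 := by
  classical
  change _ ↔ ∀ s, 1 ≤ s → s ≤ m - 1 → ∑ α ∈ Hfinset F m, (χ ^ s) (1 - α) = 0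
  rw [← coe_Hfinset, isDiffSet_coe_iff, and_iff_right (card_Hfinset hm hcard)]
  have hχm : χ ^ m = 1 := hχ ▸ pow_orderOf_eq_one χ
  constructor
  · intro hN s hs1 hs2
    exact sum_apply_one_sub_eq_zero_of_diffCount_eq (by rw [pow_right_comm, hχm, one_pow])
      (pow_ne_one_of_lt_orderOf (by omega) (by omega)) hN
  · intro hT a ha
    have hcount := diffCount_mul_add_one_eq_card hχ (fun s hs1 hs2 => hT s hs1 (by omega)) ha
    rw [card_Hfinset hm hcard] at hcount
    exact Nat.eq_of_mul_eq_mul_right hm (by omega)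

theorem stmt0 (p m f l : ℕ) (hp : p.Prime) (hm : 0 < m) (hf : 0 < f)
    (F : Type*) [Field F] [Fintype F]
    (hq : ∃ n : ℕ, 0 < n ∧ Fintype.card F = p ^ n)
    (hcard : Fintype.card F = m * f + 1)
    (hlf : f - 1 = l * m)
    (χ : MulChar F ℂ) (hχ : orderOf χ = m) :
    IsDiffSet (Hset F m) f l ↔
      ∀ s : ℕ, 1 ≤ s → s ≤ m - 1 →
        ∑ α ∈ (Set.toFinite (Hset F m)).toFinset, (χ ^ s) (1 - α) = 0 :=
  stmt0_general m f l hm F hcard hlf χ hχ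
end

section
/- Suppose f + 1 = λm and let χ be a multiplicative character of order m on F_q. Then M_{q,m} is a (q, f + 1, λ)-difference set in F_q if and only if Σ_{α ∈ H_{q,m}} χ^s(1 − α) = −1 − χ^s(−1) for every s = 1, ..., m − 1. -/
/-- The set of `m`-th powers in `F`, including `0`. -/
def Mset (F : Type*) [Field F] (m : ℕ) : Set F :=
  Hset F m ∪ {0}

open Finset

lemma aux_order_gen {F : Type*} [Field F] [Fintype F] (χ : MulChar F ℂ)
    (g : Fˣ) (hg : ∀ u : Fˣ, u ∈ Subgroup.zpowers g) :
    orderOf (χ (g : F)) = orderOf χ := by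
  rw [orderOf_eq_orderOf_iff]
  intro n
  constructor
  · intro hn
    apply MulChar.ext
    intro a
    obtain ⟨k, hk⟩ := mem_powers_iff_mem_zpowers.mpr (hg a)
    rw [MulChar.pow_apply_coe, MulChar.one_apply_coe, ← hk]
    rw [Units.val_pow_eq_pow_val, map_pow, ← pow_mul, mul_comm, pow_mul, hn, one_pow]
  · intro hn
    rw [← MulChar.pow_apply_coe, hn, MulChar.one_apply_coe]

lemma aux_mem_H {F : Type*} [Field F] [Fintype F] {m : ℕ} (hm : 0 < m)
    (χ : MulChar F ℂ) (hχ : orderOf χ = m) (x : F) :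
    x ∈ Hset F m ↔ x ≠ 0 ∧ χ x = 1 := by
  constructor
  · rintro ⟨hx0, y, rfl⟩
    refine ⟨hx0, ?_⟩
    have hy : y ≠ 0 := by
      rintro rfl; exact hx0 (zero_pow hm.ne')
    have h1 : (χ ^ m) y = 1 := by
      rw [← hχ, pow_orderOf_eq_one χ, MulChar.one_apply (isUnit_iff_ne_zero.mpr hy)]
    rw [map_pow, ← MulChar.pow_apply' χ hm.ne' y, h1]
  · rintro ⟨hx0, hx1⟩
    refine ⟨hx0, ?_⟩
    obtain ⟨g, hg⟩ := IsCyclic.exists_generator (α := Fˣ)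
    have hord : orderOf (χ (g : F)) = m := by rw [aux_order_gen χ g hg, hχ]
    obtain ⟨k, hk⟩ := mem_powers_iff_mem_zpowers.mpr (hg (Units.mk0 x hx0))
    have hk' : g ^ k = Units.mk0 x hx0 := hk
    have hxg : x = (g : F) ^ k := by
      rw [← Units.val_pow_eq_pow_val, hk', Units.val_mk0]
    have hk1 : (χ (g : F)) ^ k = 1 := by rw [← map_pow, ← hxg, hx1]
    have hdvd : m ∣ k := hord ▸ orderOf_dvd_of_pow_eq_one hk1
    obtain ⟨j, rfl⟩ := hdvd
    exact ⟨(g : F) ^ j, by rw [hxg, mul_comm, pow_mul]⟩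

theorem stmt3 (p m f l : ℕ) (hp : p.Prime) (hm : 0 < m) (hf : 0 < f)
    (F : Type*) [Field F] [Fintype F]
    (hq : ∃ n : ℕ, 0 < n ∧ Fintype.card F = p ^ n)
    (hcard : Fintype.card F = m * f + 1)
    (hlf : f + 1 = l * m)
    (χ : MulChar F ℂ) (hχ : orderOf χ = m) :
    IsDiffSet (Mset F m) (f + 1) l ↔
      ∀ s : ℕ, 1 ≤ s → s ≤ m - 1 →
        ∑ α ∈ (Set.toFinite (Hset F m)).toFinset, (χ ^ s) (1 - α)
          = -1 - (χ ^ s) (-1) := by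
  classical
  set HF : Finset F := (Set.toFinite (Hset F m)).toFinset with hHFdef
  have hmem : ∀ x : F, x ∈ HF ↔ x ≠ 0 ∧ χ x = 1 := fun x => by
    rw [hHFdef, Set.Finite.mem_toFinset]; exact aux_mem_H hm χ hχ x
  have h0 : (0:F) ∉ HF := fun h => ((hmem 0).mp h).1 rfl
  have hunit : ∀ {x : F}, x ≠ 0 → IsUnit x := fun h => isUnit_iff_ne_zero.mpr h
  have hmC : (m : ℂ) ≠ 0 := Nat.cast_ne_zero.mpr hm.ne'
  have hfC : (f : ℂ) ≠ 0 := Nat.cast_ne_zero.mpr hf.ne'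
  have hchi0 : ∀ s : ℕ, (χ ^ s) (0:F) = 0 := fun s =>
    MulChar.map_nonunit _ (by simp)
  have hchipow : ∀ (s : ℕ) (x : F), x ≠ 0 → (χ ^ s) x = (χ x) ^ s := by
    intro s x hx
    have hu := hunit hx
    rw [← hu.unit_spec, MulChar.pow_apply_coe]
  have hchiH : ∀ (s : ℕ), ∀ x ∈ HF, (χ ^ s) x = 1 := by
    intro s x hx
    rw [hchipow s x ((hmem x).mp hx).1, ((hmem x).mp hx).2, one_pow]
  have hmul : ∀ {x y : F}, x ∈ HF → y ∈ HF → x * y ∈ HF := by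
    intro x y hx hy
    obtain ⟨hx0, hx1⟩ := (hmem x).mp hx
    obtain ⟨hy0, hy1⟩ := (hmem y).mp hy
    exact (hmem _).mpr ⟨mul_ne_zero hx0 hy0, by rw [map_mul, hx1, hy1, mul_one]⟩
  have hinv : ∀ {x : F}, x ∈ HF → x⁻¹ ∈ HF := by
    intro x hx
    obtain ⟨hx0, hx1⟩ := (hmem x).mp hx
    refine (hmem _).mpr ⟨inv_ne_zero hx0, ?_⟩
    have : χ x⁻¹ * χ x = 1 := by rw [← map_mul, inv_mul_cancel₀ hx0, map_one]
    rwa [hx1, mul_one] at this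
  -- orthogonality
  have horth : ∀ x : F, x ≠ 0 →
      ∑ s ∈ range m, (χ ^ s) x = (if x ∈ HF then (m : ℂ) else 0) := by
    intro x hx
    have hone : χ ^ m = 1 := by rw [← hχ]; exact pow_orderOf_eq_one χ
    have hxm : (χ x) ^ m = 1 := by
      rw [← hchipow m x hx, hone, MulChar.one_apply (hunit hx)]
    rw [Finset.sum_congr rfl (fun s _ => hchipow s x hx)]
    by_cases hH : x ∈ HF
    · rw [if_pos hH, ((hmem x).mp hH).2]
      simp
    · rw [if_neg hH]
      have hne : χ x ≠ 1 := fun h => hH ((hmem x).mpr ⟨hx, h⟩)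
      rw [geom_sum_eq hne m, hxm, sub_self, zero_div]
  have hsne : ∀ s : ℕ, 1 ≤ s → s < m → χ ^ s ≠ 1 := by
    intro s h1 h2 h
    have hd := orderOf_dvd_of_pow_eq_one h
    rw [hχ] at hd
    exact absurd (Nat.le_of_dvd h1 hd) (not_le.mpr h2)
  have hsum0 : ∀ s : ℕ, 1 ≤ s → s < m → ∑ a : F, (χ ^ s) a = 0 := fun s h1 h2 =>
    MulChar.sum_eq_zero_of_ne_one (hsne s h1 h2)
  -- cardinality of HF
  have hcardH : HF.card = f := by
    have key1 : ∑ x : F, ∑ s ∈ range m, (χ ^ s) x = ((m * f : ℕ) : ℂ) := by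
      rw [Finset.sum_comm]
      have hterm : ∀ s ∈ range m, ∑ x : F, (χ ^ s) x
          = (if s = 0 then ((m * f : ℕ) : ℂ) else 0) := by
        intro s hs
        by_cases h : s = 0
        · subst h
          rw [if_pos rfl, pow_zero, MulChar.sum_one_eq_card_units, Fintype.card_units, hcard,
            Nat.add_sub_cancel]
        · rw [if_neg h, hsum0 s (Nat.one_le_iff_ne_zero.mpr h) (mem_range.mp hs)]
      rw [Finset.sum_congr rfl hterm, Finset.sum_ite_eq' (range m) 0]
      rw [if_pos (mem_range.mpr hm)]
    have key2 : ∑ x : F, ∑ s ∈ range m, (χ ^ s) x = (m : ℂ) * HF.card := by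
      have hterm : ∀ x : F, ∑ s ∈ range m, (χ ^ s) x
          = (if x ∈ HF then (m : ℂ) else 0) := by
        intro x
        by_cases hx : x = 0
        · subst hx
          rw [if_neg h0]
          exact Finset.sum_eq_zero fun s _ => hchi0 s
        · exact horth x hx
      rw [Finset.sum_congr rfl (fun x _ => hterm x), Finset.sum_ite_mem, Finset.univ_inter,
        Finset.sum_const, nsmul_eq_mul, mul_comm]
    have : ((m * f : ℕ) : ℂ) = (m : ℂ) * HF.card := by rw [← key1, key2]
    push_cast at this
    exact_mod_cast (mul_left_cancel₀ hmC this).symm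
  set MF : Finset F := insert (0:F) HF with hMFdef
  have hMmul : ∀ {γ x : F}, γ ∈ HF → (x ∈ MF ↔ γ * x ∈ MF) := by
    intro γ x hγ
    have hγ0 := ((hmem γ).mp hγ).1
    simp only [hMFdef, mem_insert]
    constructor
    · rintro (rfl | hx)
      · exact Or.inl (mul_zero γ)
      · exact Or.inr (hmul hγ hx)
    · rintro (h | h)
      · rcases mul_eq_zero.mp h with h | h
        · exact absurd h hγ0
        · exact Or.inl h
      · refine Or.inr ?_
        have := hmul (hinv hγ) h
        rwa [inv_mul_cancel_left₀ hγ0] at this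
  have hMcard : MF.card = f + 1 := by
    rw [hMFdef, card_insert_of_notMem h0, hcardH]
  set P : F → Finset (F × F) :=
    fun a => (MF ×ˢ MF).filter (fun p => p.1 - p.2 = a) with hPdef
  have hPmem : ∀ (a : F) (q : F × F),
      q ∈ P a ↔ (q.1 ∈ MF ∧ q.2 ∈ MF) ∧ q.1 - q.2 = a := by
    intro a q
    rw [hPdef]
    simp [Finset.mem_filter, Finset.mem_product]
  have hMsetMF : ∀ x : F, x ∈ Mset F m ↔ x ∈ MF := by
    intro x
    rw [hMFdef]
    simp only [Mset, Set.mem_union, Set.mem_singleton_iff, mem_insert, ← Set.Finite.mem_toFinset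
      (Set.toFinite (Hset F m)), ← hHFdef]
    tauto
  have hPset : ∀ a : F,
      {x : F × F | x.1 ∈ Mset F m ∧ x.2 ∈ Mset F m ∧ x.1 - x.2 = a}.ncard = (P a).card := by
    intro a
    have : {x : F × F | x.1 ∈ Mset F m ∧ x.2 ∈ Mset F m ∧ x.1 - x.2 = a} = ↑(P a) := by
      ext q
      simp only [Set.mem_setOf_eq, Finset.mem_coe, hPmem a q, hMsetMF]
      tauto
    rw [this, Set.ncard_coe_finset]
  -- key character sum identity
  have hTs : ∀ s : ℕ, 1 ≤ s → s < m →
      ∑ a : F, (χ ^ s) a * ((P a).card : ℂ)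
        = (f : ℂ) * ((χ ^ s) (-1)) + f + f * (∑ α ∈ HF, (χ ^ s) (1 - α)) := by
    intro s hs1 hs2
    have hstep1 : ∀ a : F, (χ ^ s) a * ((P a).card : ℂ) = ∑ q ∈ P a, (χ ^ s) (q.1 - q.2) := by
      intro a
      rw [Finset.sum_congr rfl (fun q hq => by rw [((hPmem a q).mp hq).2]),
        Finset.sum_const, nsmul_eq_mul, mul_comm]
    have hinner : ∀ x : F, ∑ y ∈ MF, (χ ^ s) (x - y)
        = (χ ^ s) x + ∑ y ∈ HF, (χ ^ s) (x - y) := by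
      intro x
      rw [hMFdef, Finset.sum_insert h0, sub_zero]
    have hneg : ∑ y ∈ HF, (χ ^ s) (0 - y) = (χ ^ s) (-1) * f := by
      rw [Finset.sum_congr rfl (fun y hy => by
        rw [zero_sub, ← neg_one_mul, map_mul, hchiH s y hy, mul_one]),
        Finset.sum_const, hcardH, nsmul_eq_mul, mul_comm]
    have hdiag : ∀ x ∈ HF, ∑ y ∈ HF, (χ ^ s) (x - y) = ∑ γ ∈ HF, (χ ^ s) (1 - γ) := by
      intro x hx
      have hx0 := ((hmem x).mp hx).1
      refine Finset.sum_nbij' (fun y => x⁻¹ * y) (fun γ => x * γ) ?_ ?_ ?_ ?_ ?_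
      · intro y hy; exact hmul (hinv hx) hy
      · intro γ hγ; exact hmul hx hγ
      · intro y _; exact mul_inv_cancel_left₀ hx0 y
      · intro γ _; exact inv_mul_cancel_left₀ hx0 γ
      · intro y _
        have hxy : x - y = x * (1 - x⁻¹ * y) := by
          rw [mul_sub, mul_one, mul_inv_cancel_left₀ hx0]
        rw [hxy, map_mul, hchiH s x hx, one_mul]
    have hHsum : ∑ x ∈ HF, (χ ^ s) x = (f : ℂ) := by
      rw [Finset.sum_congr rfl (hchiH s), Finset.sum_const, hcardH, nsmul_eq_mul, mul_one]
    calc ∑ a : F, (χ ^ s) a * ((P a).card : ℂ)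
        = ∑ a : F, ∑ q ∈ P a, (χ ^ s) (q.1 - q.2) :=
          Finset.sum_congr rfl (fun a _ => hstep1 a)
      _ = ∑ q ∈ MF ×ˢ MF, (χ ^ s) (q.1 - q.2) := by
          rw [hPdef]
          exact Finset.sum_fiberwise_of_maps_to (fun q _ => Finset.mem_univ (q.1 - q.2)) _
      _ = ∑ x ∈ MF, ∑ y ∈ MF, (χ ^ s) (x - y) := Finset.sum_product _ _ _
      _ = ∑ x ∈ MF, ((χ ^ s) x + ∑ y ∈ HF, (χ ^ s) (x - y)) :=
          Finset.sum_congr rfl (fun x _ => hinner x)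
      _ = ((χ ^ s) 0 + ∑ y ∈ HF, (χ ^ s) (0 - y))
            + ∑ x ∈ HF, ((χ ^ s) x + ∑ y ∈ HF, (χ ^ s) (x - y)) := by
          rw [hMFdef, Finset.sum_insert h0]
      _ = (χ ^ s) (-1) * f + ((f : ℂ) + f * (∑ α ∈ HF, (χ ^ s) (1 - α))) := by
          rw [hchi0 s, zero_add, hneg, Finset.sum_add_distrib, hHsum,
            Finset.sum_congr rfl hdiag, Finset.sum_const, hcardH, nsmul_eq_mul]
      _ = (f : ℂ) * ((χ ^ s) (-1)) + f + f * (∑ α ∈ HF, (χ ^ s) (1 - α)) := by ring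
  -- invariance of pair counts
  have hPinv : ∀ γ ∈ HF, ∀ b : F, (P (γ * b)).card = (P b).card := by
    intro γ hγ b
    have hγ0 := ((hmem γ).mp hγ).1
    refine (Finset.card_nbij' (fun q => (γ * q.1, γ * q.2)) (fun q => (γ⁻¹ * q.1, γ⁻¹ * q.2))
      ?_ ?_ ?_ ?_).symm
    · intro q hq
      obtain ⟨⟨h1, h2⟩, h3⟩ := (hPmem b q).mp hq
      refine (hPmem _ _).mpr ⟨⟨(hMmul hγ).mp h1, (hMmul hγ).mp h2⟩, ?_⟩
      rw [← mul_sub, h3]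
    · intro q hq
      obtain ⟨⟨h1, h2⟩, h3⟩ := (hPmem _ q).mp hq
      refine (hPmem b _).mpr ⟨⟨(hMmul (hinv hγ)).mp h1, (hMmul (hinv hγ)).mp h2⟩, ?_⟩
      rw [← mul_sub, h3, inv_mul_cancel_left₀ hγ0]
    · intro q _
      simp [inv_mul_cancel_left₀ hγ0]
    · intro q _
      simp [mul_inv_cancel_left₀ hγ0]
  have hPtotal : ∑ a : F, (P a).card = (f + 1) * (f + 1) := by
    rw [hPdef, ← Finset.card_eq_sum_card_fiberwise
      (f := fun q : F × F => q.1 - q.2) (t := Finset.univ) (fun q _ => Finset.mem_univ _),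
      Finset.card_product, hMcard]
  have hP0 : (P 0).card = f + 1 := by
    have himg : P 0 = MF.image (fun x => (x, x)) := by
      ext ⟨x, y⟩
      simp only [hPmem 0 (x, y), Finset.mem_image, sub_eq_zero, Prod.mk.injEq]
      constructor
      · rintro ⟨⟨h1, h2⟩, rfl⟩
        exact ⟨x, h1, rfl, rfl⟩
      · rintro ⟨z, hz, rfl, rfl⟩
        exact ⟨⟨hz, hz⟩, rfl⟩
    rw [himg, Finset.card_image_of_injective _ (fun a b h => (Prod.ext_iff.mp h).1), hMcard]
  constructor
  · -- forward
    rintro ⟨hD1, hD2⟩ s hs1 hs2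
    have hs2' : s < m := lt_of_le_of_lt hs2 (Nat.pred_lt hm.ne')
    have hNa : ∀ a : F, a ≠ 0 → ((P a).card : ℂ) = (l : ℂ) := by
      intro a ha
      have := hD2 a ha
      rw [hPset a] at this
      exact_mod_cast congrArg (Nat.cast (R := ℂ)) this
    have h1 : ∑ a : F, (χ ^ s) a * ((P a).card : ℂ) = 0 := by
      have : ∀ a : F, (χ ^ s) a * ((P a).card : ℂ) = (χ ^ s) a * l := by
        intro a
        by_cases ha : a = 0
        · subst ha; rw [hchi0 s, zero_mul, zero_mul]
        · rw [hNa a ha]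
      rw [Finset.sum_congr rfl (fun a _ => this a), ← Finset.sum_mul,
        hsum0 s hs1 hs2', zero_mul]
    rw [hTs s hs1 hs2'] at h1
    have h2 : (f : ℂ) * ((∑ α ∈ HF, (χ ^ s) (1 - α)) - (-1 - (χ ^ s) (-1))) = 0 := by
      linear_combination h1
    rcases mul_eq_zero.mp h2 with h | h
    · exact absurd h hfC
    · exact sub_eq_zero.mp h
  · -- backward
    intro hT
    have hlfC : (f : ℂ) + 1 = (l : ℂ) * m := by exact_mod_cast hlf
    constructor
    · have : Mset F m = ↑MF := by
        ext x
        rw [Finset.mem_coe, ← hMsetMF]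
      rw [this, Set.ncard_coe_finset, hMcard]
    · intro b hb
      rw [hPset b]
      have hV : ∀ s ∈ range m,
          ∑ a ∈ Finset.univ.erase (0:F), (χ ^ s) a * (((P a).card : ℂ) - l) = 0 := by
        intro s hsm
        rcases Nat.eq_zero_or_pos s with rfl | hs1
        · simp only [pow_zero]
          rw [Finset.sum_congr rfl (fun a ha => by
            rw [MulChar.one_apply (hunit (Finset.mem_erase.mp ha).1), one_mul])]
          rw [Finset.sum_sub_distrib]
          have e1 : ∑ a ∈ Finset.univ.erase (0:F), ((P a).card : ℂ)
              = ((f : ℂ) + 1) * ((f : ℂ) + 1) - ((f : ℂ) + 1) := by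
            have htot : ∑ a : F, ((P a).card : ℂ) = ((f : ℂ) + 1) * ((f : ℂ) + 1) := by
              rw [← Nat.cast_sum, hPtotal]
              push_cast
              ring
            have hp0 : ((P 0).card : ℂ) = (f : ℂ) + 1 := by rw [hP0]; push_cast; ring
            rw [Finset.sum_erase_eq_sub (Finset.mem_univ (0:F)), htot, hp0]
          have e2 : ∑ _a ∈ Finset.univ.erase (0:F), (l : ℂ) = ((m : ℂ) * f) * l := by
            rw [Finset.sum_const, Finset.card_erase_of_mem (Finset.mem_univ _),
              Finset.card_univ, hcard, nsmul_eq_mul]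
            push_cast
            ring
          rw [e1, e2]
          linear_combination ((f : ℂ)) * hlfC
        · have hs2 : s < m := mem_range.mp hsm
          have hs2' : s ≤ m - 1 := Nat.le_sub_one_of_lt hs2
          have hext : ∑ a ∈ Finset.univ.erase (0:F), (χ ^ s) a * (((P a).card : ℂ) - l)
              = ∑ a : F, (χ ^ s) a * (((P a).card : ℂ) - l) := by
            rw [Finset.sum_erase_eq_sub (Finset.mem_univ (0:F)), hchi0 s, zero_mul, sub_zero]
          rw [hext]
          have hsplit : ∑ a : F, (χ ^ s) a * (((P a).card : ℂ) - l)
              = (∑ a : F, (χ ^ s) a * ((P a).card : ℂ)) - (∑ a : F, (χ ^ s) a) * l := by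
            rw [Finset.sum_mul, ← Finset.sum_sub_distrib]
            exact Finset.sum_congr rfl (fun a _ => by ring)
          rw [hsplit, hTs s hs1 hs2, hsum0 s hs1 hs2, hT s hs1 hs2', zero_mul]
          ring
      -- assemble
      have himg : (Finset.univ.erase (0:F)).filter (fun a => b⁻¹ * a ∈ HF)
          = HF.image (fun γ => b * γ) := by
        ext a
        simp only [Finset.mem_filter, Finset.mem_erase, Finset.mem_univ, and_true,
          Finset.mem_image, true_and]
        constructor
        · rintro ⟨ha, hmemba⟩
          exact ⟨b⁻¹ * a, hmemba, by rw [mul_inv_cancel_left₀ hb]⟩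
        · rintro ⟨γ, hγ, rfl⟩
          have hγ0 := ((hmem γ).mp hγ).1
          refine ⟨mul_ne_zero hb hγ0, ?_⟩
          rwa [inv_mul_cancel_left₀ hb]
      have big : (m : ℂ) * ((f : ℂ) * (((P b).card : ℂ) - l)) = 0 := by
        have h1 : ∑ s ∈ range m, (χ ^ s) b⁻¹
            * ∑ a ∈ Finset.univ.erase (0:F), (χ ^ s) a * (((P a).card : ℂ) - l) = 0 :=
          Finset.sum_eq_zero fun s hs => by rw [hV s hs, mul_zero]
        calc (m : ℂ) * ((f : ℂ) * (((P b).card : ℂ) - l))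
            = ∑ γ ∈ HF, (m : ℂ) * ((((P (b * γ)).card : ℂ)) - l) := by
              rw [Finset.sum_congr rfl (fun γ hγ => by
                rw [mul_comm b γ, hPinv γ hγ b]), Finset.sum_const, hcardH, nsmul_eq_mul]
              ring
          _ = ∑ a ∈ (Finset.univ.erase (0:F)).filter (fun a => b⁻¹ * a ∈ HF),
                (m : ℂ) * (((P a).card : ℂ) - l) := by
              rw [himg, Finset.sum_image (fun x _ y _ h => mul_left_cancel₀ hb h)]
          _ = ∑ a ∈ Finset.univ.erase (0:F),
                (if b⁻¹ * a ∈ HF then (m : ℂ) else 0) * (((P a).card : ℂ) - l) := by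
              rw [Finset.sum_filter]
              exact Finset.sum_congr rfl (fun a _ => by
                by_cases h : b⁻¹ * a ∈ HF <;> simp [h])
          _ = ∑ a ∈ Finset.univ.erase (0:F),
                (∑ s ∈ range m, (χ ^ s) (b⁻¹ * a)) * (((P a).card : ℂ) - l) := by
              refine Finset.sum_congr rfl (fun a ha => ?_)
              rw [horth (b⁻¹ * a) (mul_ne_zero (inv_ne_zero hb) (Finset.mem_erase.mp ha).1)]
          _ = ∑ s ∈ range m, (χ ^ s) b⁻¹
                * ∑ a ∈ Finset.univ.erase (0:F), (χ ^ s) a * (((P a).card : ℂ) - l) := by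
              rw [Finset.sum_congr rfl
                (fun a (_ : a ∈ Finset.univ.erase (0:F)) => Finset.sum_mul _ _ _),
                Finset.sum_comm]
              refine Finset.sum_congr rfl (fun t _ => ?_)
              rw [Finset.mul_sum]
              exact Finset.sum_congr rfl (fun a _ => by rw [map_mul]; ring)
          _ = 0 := h1
      have h2 := mul_eq_zero.mp big
      rcases h2 with h | h
      · exact absurd h hmC
      rcases mul_eq_zero.mp h with h | h
      · exact absurd h hfC
      have : ((P b).card : ℂ) = (l : ℂ) := by linear_combination h
      exact_mod_cast this
end

section
/- Let m be an even positive integer. The map sending a pair (θ, (ĝ_0, ..., ĝ_{m−1})) with 0 ≤ θ ≤ m/2 − 1 and (ĝ_0, ..., ĝ_{m−1}) ∈ Ĺ_{m,θ} to the point (g_0, g_1, ..., g_{m−1}, h) given by g_s = (1/m) Σ_{t=0}^{m−1} ζ_m^{st} ĝ_t for s = 0, ..., m − 1 and h = ζ_{m/2}^θ is a bijection from the disjoint union of the sets Ĺ_{m,θ} over θ = 0, ..., m/2 − 1 onto L_m. -/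
/-- The system of order `m` on `g`-level, in unknowns `(g_0, …, g_{m-1}, h)`,
with subscripts of `g` read modulo `m`. -/
def GLevel (m : ℕ) (g : ZMod m → ℂ) (h : ℂ) : Prop :=
  (∀ s : ℕ, 1 ≤ s → s ≤ m / 2 - 1 →
    ∑ t ∈ Finset.range m,
      (-1 : ℂ) ^ t * g (t : ZMod m) * g ((2 * (s : ℤ) - (t : ℤ) : ℤ) : ZMod m) = 0) ∧
  (∀ s : ℕ, 1 ≤ s → s ≤ m / 2 →
    g (s : ZMod m) * g ((m - s : ℕ) : ZMod m) = (-1 : ℂ) ^ s) ∧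
  (∀ s : ℕ, 1 ≤ s → s ≤ m / 2 - 1 →
    h ^ s * g (s : ZMod m) * g ((m / 2 + s : ℕ) : ZMod m)
      = g ((2 * s : ℕ) : ZMod m) * g ((m / 2 : ℕ) : ZMod m)) ∧
  h ^ (m / 2) = 1

/-- The system of order `m` on `(ĝ, θ)`-level, in unknowns `(ĝ_0, …, ĝ_{m-1})`,
with subscripts of `ĝ` read modulo `m`. -/
def GhatLevel (m : ℕ) (θ : ℕ) (gh : ZMod m → ℂ) : Prop :=
  (∀ s : ℕ, s ≤ m / 2 - 1 →
    (m : ℂ) ^ 2 * gh (s : ZMod m) * gh ((m / 2 + s : ℕ) : ZMod m) =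
      (∑ t ∈ Finset.range m, gh (t : ZMod m)) ^ 2 + (m : ℂ) ^ 2 * ((m : ℂ) - 1)) ∧
  (∀ s : ℕ, s ≤ m / 2 - 1 →
    (m : ℂ) * ∑ t ∈ Finset.range m, gh (t : ZMod m) * gh ((s + t : ℕ) : ZMod m) =
      (∑ t ∈ Finset.range m, gh (t : ZMod m)) ^ 2 - (m : ℂ) ^ 2) ∧
  (∀ s : ℕ, s ≤ m / 2 - 1 →
    ∑ t ∈ Finset.range m,
        (-1 : ℂ) ^ t * gh (t : ZMod m) *
          gh ((2 * (s : ℤ) - 2 * (θ : ℤ) - (t : ℤ) : ℤ) : ZMod m) =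
      (gh (s : ZMod m) + gh ((m / 2 + s : ℕ) : ZMod m)) *
        ∑ t ∈ Finset.range m, (-1 : ℂ) ^ t * gh (t : ZMod m))

/-!
Write `m = 2n`, `ψ = ZMod.stdAddChar` and `ε x = ψ (n * x) = (-1) ^ x`, so that the map is
`ĝ ↦ 𝓕⁻ ĝ` on the first component and `θ ↦ ψ (2θ)` on the second. For `ĝ = 𝓕 g`, every quadratic
expression in `ĝ` on the `ĝ`-level is a twisted convolution of `g`:
`∑ t, ψ (a t) ĝ t ĝ (u t + c) = m ∑ l, ψ (-c l) g (a - u l) g l`.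
Thus (I) says that `x ↦ ĝ x ĝ (x + n)` is constant, i.e. that `∑ k, ε k g k g (a - k)` vanishes for
`a ≠ 0` (the value of the constant is then fixed by (ii)); at odd `a` the vanishing is automatic
(substitute `k ↦ a - k`), so it amounts to (i). (II) says that the transform of `x ↦ g x g (-x)` is
constant off `n`, which together with (I) is (ii).
(III) is the even part of the transform of (iii), and both sides of (iii) are `n`-periodic, so they
are determined by their even Fourier coefficients. The ranges `s < n` in both systems suffice by the
symmetries `s ↦ s + n` and `s ↦ -s`. Finally `h ^ n = 1` forces `h = ζ_n ^ θ` for a unique `θ < n`.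
-/

open Finset ZMod

namespace ZMod

section Fourier

variable {N : ℕ} [NeZero N]

lemma sum_range_natCast {M : Type*} [AddCommMonoid M] (f : ZMod N → M) :
    ∑ t ∈ range N, f t = ∑ x, f x := by
  refine sum_nbij' (fun t => (t : ZMod N)) ZMod.val (fun _ _ => mem_univ _)
    (fun x _ => mem_range.mpr x.val_lt) (fun t ht => ?_) (fun x _ => by simp) (fun _ _ => rfl)
  exact ZMod.val_natCast_of_lt (mem_range.mp ht)

lemma stdAddChar_natCast_eq_exp_pow (k : ℕ) :
    stdAddChar (k : ZMod N) = Complex.exp (2 * Real.pi * Complex.I / N) ^ k := by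
  rw [stdAddChar_apply, toCircle_natCast, ← Complex.exp_nat_mul]
  ring_nf

lemma invDFT_apply_eq_sum_range (Ψ : ZMod N → ℂ) (s : ZMod N) :
    𝓕⁻ Ψ s = 1 / (N : ℂ) *
      ∑ t ∈ range N, Complex.exp (2 * Real.pi * Complex.I / N) ^ (s.val * t) * Ψ t := by
  rw [invDFT_apply, smul_eq_mul, one_div, ← sum_range_natCast]
  refine congrArg _ (sum_congr rfl fun t _ => ?_)
  rw [smul_eq_mul, ← stdAddChar_natCast_eq_exp_pow, Nat.cast_mul, ZMod.natCast_zmod_val,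
    mul_comm s]

lemma sum_stdAddChar_mul (b : ZMod N) :
    ∑ x : ZMod N, stdAddChar (b * x) = if b = 0 then (N : ℂ) else 0 := by
  simp_rw [mul_comm b]
  rw [AddChar.sum_mulShift b (isPrimitive_stdAddChar N), ZMod.card, Nat.cast_ite, Nat.cast_zero]

lemma sum_stdAddChar_mul_dft (g : ZMod N → ℂ) (a : ZMod N) :
    ∑ t, stdAddChar (a * t) * 𝓕 g t = N * g a := by
  have h := invDFT_apply (𝓕 g) a
  simp only [LinearEquiv.symm_apply_apply, smul_eq_mul, mul_comm _ a] at h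
  rw [h, ← mul_assoc, mul_inv_cancel₀ (Nat.cast_ne_zero.mpr (NeZero.ne N)), one_mul]

lemma sum_range_dft (g : ZMod N → ℂ) : ∑ t ∈ range N, 𝓕 g t = N * g 0 := by
  rw [sum_range_natCast, ← sum_stdAddChar_mul_dft]
  simp

lemma sum_stdAddChar_mul_dft_mul_dft (g : ZMod N → ℂ) (a u c : ZMod N) :
    ∑ t, stdAddChar (a * t) * (𝓕 g t * 𝓕 g (u * t + c)) =
      N * ∑ l, stdAddChar (-(c * l)) * (g (a - u * l) * g l) := by
  calc ∑ t, stdAddChar (a * t) * (𝓕 g t * 𝓕 g (u * t + c))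
      = ∑ k, ∑ l, ∑ t,
          stdAddChar (t * (a - u * l - k)) * (stdAddChar (-(c * l)) * (g k * g l)) := by
        simp_rw [dft_apply, smul_eq_mul, sum_mul_sum, mul_sum]
        rw [sum_comm]
        refine sum_congr rfl fun k _ => ?_
        rw [sum_comm]
        refine sum_congr rfl fun l _ => sum_congr rfl fun t _ => ?_
        have h : stdAddChar (a * t) * stdAddChar (-(k * t)) * stdAddChar (-(l * (u * t + c)))
            = stdAddChar (t * (a - u * l - k)) * stdAddChar (-(c * l)) := by
          simp only [← AddChar.map_add_eq_mul]
          ring_nf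
        linear_combination g k * g l * h
    _ = N * ∑ l, stdAddChar (-(c * l)) * (g (a - u * l) * g l) := by
        rw [sum_comm, mul_sum]
        refine sum_congr rfl fun l _ => ?_
        simp_rw [← sum_mul, mul_comm _ (_ - _), sum_stdAddChar_mul, sub_eq_zero, ite_mul, zero_mul]
        rw [sum_ite_eq]
        simp only [mem_univ, if_true]

lemma eq_of_forall_sum_stdAddChar_mul_eq {f f' : ZMod N → ℂ}
    (h : ∀ a, ∑ t, stdAddChar (a * t) * f t = ∑ t, stdAddChar (a * t) * f' t) : f = f' := by
  have hdft : ∀ φ : ZMod N → ℂ, ∀ k, 𝓕 φ k = ∑ t, stdAddChar (-k * t) * φ t := fun φ k => by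
    simp only [dft_apply, smul_eq_mul, neg_mul, mul_comm _ k]
  refine dft.injective (funext fun k => ?_)
  rw [hdft, hdft, h]

end Fourier

section Half

variable {n : ℕ}

lemma two_mul_natCast_half : (2 : ZMod (2 * n)) * n = 0 := by
  exact_mod_cast ZMod.natCast_self (2 * n)

lemma neg_natCast_half : -(n : ZMod (2 * n)) = n := by
  linear_combination (-1 : ZMod (2 * n)) * two_mul_natCast_half (n := n)

lemma two_mul_add_natCast_half (x : ZMod (2 * n)) : 2 * (x + n) = 2 * x := by
  rw [mul_add, two_mul_natCast_half, add_zero]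

lemma add_natCast_half_add_natCast_half (x : ZMod (2 * n)) : x + n + n = x := by
  rw [add_assoc, ← two_mul, two_mul_natCast_half, add_zero]

lemma neg_natCast_half_mul (x : ZMod (2 * n)) : -(n * x) = n * x := by
  rw [← neg_mul, neg_natCast_half]

lemma natCast_eq_zero_iff_of_lt {s : ℕ} (hs : s < 2 * n) : (s : ZMod (2 * n)) = 0 ↔ s = 0 := by
  rw [← Nat.cast_zero, ZMod.natCast_eq_natCast_iff', Nat.mod_eq_of_lt hs,
    Nat.zero_mod]

variable [NeZero n]

lemma natCast_half_ne_zero : (n : ZMod (2 * n)) ≠ 0 := by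
  rw [Ne, natCast_eq_zero_iff_of_lt (by have := NeZero.ne n; omega)]
  exact NeZero.ne n

lemma exists_natCast_lt_eq_or_eq_add (x : ZMod (2 * n)) :
    ∃ s : ℕ, s < n ∧ (x = s ∨ x = s + n) := by
  by_cases h : x.val < n
  · exact ⟨x.val, h, Or.inl (ZMod.natCast_zmod_val x).symm⟩
  · refine ⟨x.val - n, by have := x.val_lt; omega, Or.inr ?_⟩
    rw [← Nat.cast_add, Nat.sub_add_cancel (not_lt.mp h), ZMod.natCast_zmod_val]

lemma exists_natCast_le_eq_or_eq_neg (x : ZMod (2 * n)) :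
    ∃ s : ℕ, s ≤ n ∧ (x = s ∨ x = -s) := by
  by_cases h : x.val ≤ n
  · exact ⟨x.val, h, Or.inl (ZMod.natCast_zmod_val x).symm⟩
  · refine ⟨2 * n - x.val, by omega, Or.inr ?_⟩
    rw [Nat.cast_sub x.val_lt.le, ZMod.natCast_self, ZMod.natCast_zmod_val, zero_sub, neg_neg]

lemma forall_natCast_lt_iff {P : ZMod (2 * n) → Prop} (hP : ∀ x, P (x + n) → P x) :
    (∀ s : ℕ, s < n → P s) ↔ ∀ x, P x := by
  refine ⟨fun h x => ?_, fun h s _ => h s⟩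
  obtain ⟨s, hs, rfl | rfl⟩ := exists_natCast_lt_eq_or_eq_add x
  · exact h s hs
  · exact hP _ (by rw [add_natCast_half_add_natCast_half]; exact h s hs)

lemma forall_natCast_le_iff {P : ZMod (2 * n) → Prop} (hP : ∀ x, P (-x) → P x) :
    (∀ s : ℕ, s ≤ n → P s) ↔ ∀ x, P x := by
  refine ⟨fun h x => ?_, fun h s _ => h s⟩
  obtain ⟨s, hs, rfl | rfl⟩ := exists_natCast_le_eq_or_eq_neg x
  · exact h s hs
  · exact hP _ (by rw [neg_neg]; exact h s hs)

lemma natCast_eq_half_iff_of_lt {s : ℕ} (hs : s < 2 * n) : (s : ZMod (2 * n)) = n ↔ s = n := by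
  rw [ZMod.natCast_eq_natCast_iff', Nat.mod_eq_of_lt hs,
    Nat.mod_eq_of_lt (by have := NeZero.ne n; omega)]

lemma two_mul_eq_zero_iff {x : ZMod (2 * n)} : 2 * x = 0 ↔ x = 0 ∨ x = n := by
  refine ⟨fun hx => ?_, ?_⟩
  · obtain ⟨s, hs, hxs⟩ := exists_natCast_lt_eq_or_eq_add x
    have h2s : ((2 * s : ℕ) : ZMod (2 * n)) = 0 := by
      rcases hxs with rfl | rfl
      · exact_mod_cast hx
      · push_cast
        linear_combination hx - two_mul_natCast_half (n := n)
    rw [ZMod.natCast_eq_zero_iff] at h2s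
    obtain rfl : s = 0 := by
      obtain ⟨c, hc⟩ := h2s
      rcases c with _ | c
      · omega
      · nlinarith
    simpa using hxs
  · rintro (rfl | rfl)
    · exact mul_zero 2
    · exact two_mul_natCast_half

lemma stdAddChar_natCast_half : stdAddChar (n : ZMod (2 * n)) = -1 := by
  have hn : (n : ℂ) ≠ 0 := Nat.cast_ne_zero.mpr (NeZero.ne n)
  rw [stdAddChar_natCast_eq_exp_pow, ← Complex.exp_nat_mul, ← Complex.exp_pi_mul_I]
  congr 1
  push_cast
  field_simp

lemma stdAddChar_two_mul_natCast (θ : ℕ) :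
    stdAddChar (2 * (θ : ZMod (2 * n))) = Complex.exp (2 * Real.pi * Complex.I / n) ^ θ := by
  have hn : (n : ℂ) ≠ 0 := Nat.cast_ne_zero.mpr (NeZero.ne n)
  rw [show 2 * (θ : ZMod (2 * n)) = (2 * θ : ℕ) by push_cast; rfl,
    stdAddChar_natCast_eq_exp_pow, pow_mul, ← Complex.exp_nat_mul]
  congr 2
  push_cast
  field_simp

lemma stdAddChar_half_mul_natCast (t : ℕ) :
    stdAddChar ((n : ZMod (2 * n)) * (t : ZMod (2 * n))) = (-1) ^ t := by
  rw [mul_comm (n : ZMod (2 * n)), ← nsmul_eq_mul, AddChar.map_nsmul_eq_pow, stdAddChar_natCast_half]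

lemma sum_range_neg_one_pow_mul (f : ZMod (2 * n) → ℂ) :
    ∑ t ∈ range (2 * n), (-1 : ℂ) ^ t * f t = ∑ x, stdAddChar ((n : ZMod (2 * n)) * x) * f x := by
  rw [← sum_range_natCast]
  simp only [stdAddChar_half_mul_natCast]

lemma exists_eq_two_mul_of_stdAddChar_half_mul_eq_one {y : ZMod (2 * n)}
    (h : stdAddChar ((n : ZMod (2 * n)) * y) = 1) : ∃ x, y = 2 * x := by
  rw [← ZMod.natCast_zmod_val y, stdAddChar_half_mul_natCast,
    neg_one_pow_eq_one_iff_even (by norm_num)] at h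
  obtain ⟨r, hr⟩ := h
  exact ⟨r, by rw [← ZMod.natCast_zmod_val y, hr]; push_cast; ring⟩

lemma sum_stdAddChar_two_mul_mul_dft_two_mul (φ : ZMod (2 * n) → ℂ) (y : ZMod (2 * n)) :
    ∑ x, stdAddChar (2 * y * x) * 𝓕 φ (2 * x) = (2 * n : ℕ) * (φ y + φ (y + n)) := by
  have hy : y ≠ y + n := fun h => natCast_half_ne_zero (by linear_combination -h)
  have hsum : ∀ l, (∑ x, stdAddChar (2 * (y - l) * x) = 0) ∨ l = y ∨ l = y + n := fun l => by
    by_cases h : 2 * (y - l) = 0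
    · rcases two_mul_eq_zero_iff.mp h with h | h
      · exact Or.inr (Or.inl (sub_eq_zero.mp h).symm)
      · exact Or.inr (Or.inr (by linear_combination -h - two_mul_natCast_half (n := n)))
    · rw [sum_stdAddChar_mul, if_neg h]
      exact Or.inl rfl
  calc ∑ x, stdAddChar (2 * y * x) * 𝓕 φ (2 * x)
      = ∑ l, φ l * ∑ x, stdAddChar (2 * (y - l) * x) := by
        simp_rw [dft_apply, smul_eq_mul, mul_sum]
        rw [sum_comm]
        refine sum_congr rfl fun l _ => sum_congr rfl fun x _ => ?_
        rw [← mul_assoc, ← AddChar.map_add_eq_mul]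
        ring_nf
    _ = (2 * n : ℕ) * (φ y + φ (y + n)) := by
        rw [sum_eq_add y (y + n) hy]
        · have hy' : 2 * (y - (y + n)) = 0 := by linear_combination -two_mul_natCast_half (n := n)
          rw [sum_stdAddChar_mul, sum_stdAddChar_mul, sub_self, mul_zero, if_pos rfl, if_pos hy']
          ring
        · intro l _ hl
          rcases hsum l with h | h | h
          · rw [h, mul_zero]
          · exact absurd h hl.1
          · exact absurd h hl.2
        all_goals simp

lemma eq_of_forall_dft_two_mul_eq {φ φ' : ZMod (2 * n) → ℂ} (hφ : ∀ x, φ (x + n) = φ x)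
    (hφ' : ∀ x, φ' (x + n) = φ' x) (h : ∀ x, 𝓕 φ (2 * x) = 𝓕 φ' (2 * x)) : φ = φ' := by
  have hN : ((2 * n : ℕ) : ℂ) ≠ 0 := Nat.cast_ne_zero.mpr (NeZero.ne _)
  funext y
  have hy := sum_stdAddChar_two_mul_mul_dft_two_mul φ y
  simp only [h, sum_stdAddChar_two_mul_mul_dft_two_mul, hφ, hφ'] at hy
  linear_combination (-1 / 2 : ℂ) * mul_left_cancel₀ hN hy

lemma dft_comp_two_mul (g : ZMod (2 * n) → ℂ) (x : ZMod (2 * n)) :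
    𝓕 (fun l => g (2 * l)) (2 * x) = 𝓕 g x + 𝓕 g (x + n) := by
  have hN : ((2 * n : ℕ) : ℂ) ≠ 0 := Nat.cast_ne_zero.mpr (NeZero.ne _)
  have hφ : ∀ k, 𝓕 (fun t => 𝓕 g (-t)) k = (2 * n : ℕ) * g k := fun k => by
    simp only [dft_comp_neg, dft_dft, neg_neg, smul_eq_mul]
  apply mul_left_cancel₀ hN
  calc ((2 * n : ℕ) : ℂ) * 𝓕 (fun l => g (2 * l)) (2 * x)
      = ∑ l, stdAddChar (2 * -x * l) * 𝓕 (fun t => 𝓕 g (-t)) (2 * l) := by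
        simp only [hφ, dft_apply (fun l => g (2 * l)), smul_eq_mul, mul_sum]
        refine sum_congr rfl fun l _ => ?_
        ring_nf
    _ = (2 * n : ℕ) * (𝓕 g x + 𝓕 g (x + n)) := by
        rw [sum_stdAddChar_two_mul_mul_dft_two_mul, neg_neg, neg_add, neg_neg, neg_natCast_half]

end Half

section Correlation

variable {n : ℕ} [NeZero n] (g : ZMod (2 * n) → ℂ)

lemma sum_stdAddChar_mul_dft_mul_dft_add_half (a : ZMod (2 * n)) :
    ∑ t, stdAddChar (a * t) * (𝓕 g t * 𝓕 g (t + n)) =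
      (2 * n : ℕ) * ∑ k, stdAddChar ((n : ZMod (2 * n)) * k) * (g k * g (a - k)) := by
  have h := sum_stdAddChar_mul_dft_mul_dft g a 1 n
  simp only [one_mul, neg_natCast_half_mul] at h
  rw [h]
  simp only [mul_comm (g (a - _))]

lemma sum_dft_mul_dft_add (d : ZMod (2 * n)) :
    ∑ t, 𝓕 g t * 𝓕 g (t + d) =
      (2 * n : ℕ) * ∑ k, stdAddChar (d * k) * (g k * g (-k)) := by
  have h := sum_stdAddChar_mul_dft_mul_dft g 0 1 d
  simp only [zero_mul, one_mul, AddChar.map_zero_eq_one, zero_sub] at h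
  rw [h, ← Equiv.sum_comp (Equiv.neg _)]
  simp only [Equiv.neg_apply, neg_neg, mul_neg]

lemma sum_stdAddChar_half_mul_dft_mul_dft_sub (c : ZMod (2 * n)) :
    ∑ t, stdAddChar ((n : ZMod (2 * n)) * t) * (𝓕 g t * 𝓕 g (c - t)) =
      (2 * n : ℕ) * ∑ l, stdAddChar (-(c * l)) * (g (l + n) * g l) := by
  have h := sum_stdAddChar_mul_dft_mul_dft g n (-1) c
  simp only [neg_one_mul, neg_add_eq_sub, sub_neg_eq_add, add_comm (n : ZMod (2 * n))] at h
  exact h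

lemma sum_stdAddChar_half_mul_mul_sub_eq_mul (a : ZMod (2 * n)) :
    ∑ k, stdAddChar ((n : ZMod (2 * n)) * k) * (g k * g (a - k)) =
      stdAddChar ((n : ZMod (2 * n)) * a) *
        ∑ k, stdAddChar ((n : ZMod (2 * n)) * k) * (g k * g (a - k)) := by
  conv_lhs => rw [← Equiv.sum_comp (Equiv.subLeft a)]
  rw [mul_sum]
  refine sum_congr rfl fun k _ => ?_
  have h : stdAddChar ((n : ZMod (2 * n)) * (a - k)) =
      stdAddChar ((n : ZMod (2 * n)) * a) * stdAddChar ((n : ZMod (2 * n)) * k) := by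
    rw [← AddChar.map_add_eq_mul, mul_sub, sub_eq_add_neg, neg_natCast_half_mul]
  simp only [Equiv.subLeft_apply, sub_sub_cancel, h]
  ring

lemma sum_stdAddChar_half_mul_mul_sub_eq_zero
    (h : ∀ x, 2 * x ≠ 0 → ∑ k, stdAddChar ((n : ZMod (2 * n)) * k) * (g k * g (2 * x - k)) = 0)
    {a : ZMod (2 * n)} (ha : a ≠ 0) :
    ∑ k, stdAddChar ((n : ZMod (2 * n)) * k) * (g k * g (a - k)) = 0 := by
  by_cases hε : stdAddChar ((n : ZMod (2 * n)) * a) = 1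
  · obtain ⟨x, rfl⟩ := exists_eq_two_mul_of_stdAddChar_half_mul_eq_one hε
    exact h x ha
  · have h' := sum_stdAddChar_half_mul_mul_sub_eq_mul g a
    have : (1 - stdAddChar ((n : ZMod (2 * n)) * a)) *
        ∑ k, stdAddChar ((n : ZMod (2 * n)) * k) * (g k * g (a - k)) = 0 := by
      linear_combination h'
    exact (mul_eq_zero.mp this).resolve_left (sub_ne_zero.mpr (Ne.symm hε))

lemma forall_mul_neg_eq_iff_sum_stdAddChar_mul :
    (∀ x ≠ 0, g x * g (-x) = stdAddChar ((n : ZMod (2 * n)) * x)) ↔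
      ∀ d : ZMod (2 * n), ∑ k, stdAddChar (d * k) * (g k * g (-k)) =
        (if d = n then ((2 * n : ℕ) : ℂ) else 0) + (g 0 ^ 2 - 1) := by
  set f : ZMod (2 * n) → ℂ := fun k =>
    stdAddChar ((n : ZMod (2 * n)) * k) + if k = 0 then g 0 ^ 2 - 1 else 0
  have hf : ∀ d : ZMod (2 * n), ∑ k, stdAddChar (d * k) * f k =
      (if d = n then ((2 * n : ℕ) : ℂ) else 0) + (g 0 ^ 2 - 1) := fun d => by
    have hd : d + n = 0 ↔ d = n := by rw [add_eq_zero_iff_eq_neg, neg_natCast_half]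
    simp only [f, mul_add, sum_add_distrib, ← AddChar.map_add_eq_mul, ← add_mul,
      sum_stdAddChar_mul, hd, mul_ite, mul_zero, sum_ite_eq', mem_univ, if_true,
      AddChar.map_zero_eq_one, one_mul]
  have hP : (∀ x ≠ 0, g x * g (-x) = stdAddChar ((n : ZMod (2 * n)) * x)) ↔
      (fun k => g k * g (-k)) = f := by
    refine ⟨fun h => funext fun k => ?_, fun h x hx => by simpa [f, hx] using congrFun h x⟩
    by_cases hk : k = 0
    · simp [f, hk, sq]
    · simp [f, hk, h k hk]
  rw [hP]
  refine ⟨fun h d => by rw [← hf d, ← h], fun h => ?_⟩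
  exact eq_of_forall_sum_stdAddChar_mul_eq fun d => by rw [h d, hf d]

end Correlation

end ZMod

section Conditions

variable {n : ℕ} [NeZero n] (g : ZMod (2 * n) → ℂ)

theorem dft_correlation_conditions_iff :
    ((∀ x, 𝓕 g x * 𝓕 g (x + n) = g 0 ^ 2 + ((2 * n : ℕ) - 1)) ∧
      (∀ d ≠ (n : ZMod (2 * n)), ∑ t, 𝓕 g t * 𝓕 g (t + d) = (2 * n : ℕ) * (g 0 ^ 2 - 1))) ↔
    ((∀ x, 2 * x ≠ 0 → ∑ k, stdAddChar ((n : ZMod (2 * n)) * k) * (g k * g (2 * x - k)) = 0) ∧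
      (∀ x ≠ 0, g x * g (-x) = stdAddChar ((n : ZMod (2 * n)) * x))) := by
  have hN : ((2 * n : ℕ) : ℂ) ≠ 0 := Nat.cast_ne_zero.mpr (NeZero.ne _)
  rw [forall_mul_neg_eq_iff_sum_stdAddChar_mul]
  constructor
  · rintro ⟨hI, hII⟩
    refine ⟨fun x hx => ?_, fun d => ?_⟩
    · have h := sum_stdAddChar_mul_dft_mul_dft_add_half g (2 * x)
      simp only [hI, ← sum_mul, sum_stdAddChar_mul, if_neg hx, zero_mul] at h
      exact (mul_eq_zero.mp h.symm).resolve_left hN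
    · have h := sum_dft_mul_dft_add g d
      split_ifs with hd
      · subst hd
        simp only [hI, sum_const, card_univ, ZMod.card, nsmul_eq_mul] at h
        apply mul_left_cancel₀ hN
        linear_combination -h
      · rw [hII d hd] at h
        apply mul_left_cancel₀ hN
        linear_combination -h
  · rintro ⟨hi, hii⟩
    refine ⟨fun x => ?_, fun d hd => by rw [sum_dft_mul_dft_add, hii d, if_neg hd, zero_add]⟩
    refine congrFun (eq_of_forall_sum_stdAddChar_mul_eq
      (f := fun t => 𝓕 g t * 𝓕 g (t + n)) (f' := fun _ => g 0 ^ 2 + ((2 * n : ℕ) - 1))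
      fun a => ?_) x
    rw [sum_stdAddChar_mul_dft_mul_dft_add_half, ← sum_mul, sum_stdAddChar_mul]
    split_ifs with ha
    · subst ha
      simp only [zero_sub, hii, if_pos]
      ring
    · rw [sum_stdAddChar_half_mul_mul_sub_eq_zero g hi ha, mul_zero, zero_mul]

theorem dft_twist_condition_iff (θ : ZMod (2 * n)) :
    (∀ x, ∑ t, stdAddChar ((n : ZMod (2 * n)) * t) * (𝓕 g t * 𝓕 g (2 * x - 2 * θ - t)) =
        (2 * n : ℕ) * ((𝓕 g x + 𝓕 g (x + n)) * g n)) ↔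
      ∀ u, stdAddChar (2 * θ * u) * (g u * g (u + n)) = g (2 * u) * g n := by
  have hN : ((2 * n : ℕ) : ℂ) ≠ 0 := Nat.cast_ne_zero.mpr (NeZero.ne _)
  set F : ZMod (2 * n) → ℂ := fun u => stdAddChar (2 * θ * u) * (g u * g (u + n))
  set Φ : ZMod (2 * n) → ℂ := fun u => g (2 * u) * g n
  have hL : ∀ x, ∑ t, stdAddChar ((n : ZMod (2 * n)) * t) * (𝓕 g t * 𝓕 g (2 * x - 2 * θ - t)) =
      (2 * n : ℕ) * 𝓕 F (2 * x) := fun x => by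
    rw [sum_stdAddChar_half_mul_dft_mul_dft_sub, dft_apply]
    congr 1
    refine sum_congr rfl fun l _ => ?_
    simp only [F, smul_eq_mul, ← mul_assoc, ← AddChar.map_add_eq_mul]
    ring_nf
  have hR : ∀ x, (𝓕 g x + 𝓕 g (x + n)) * g n = 𝓕 Φ (2 * x) := fun x => by
    simp only [Φ, dft_mul_const, dft_comp_two_mul]
  simp_rw [hL, hR, mul_right_inj' hN]
  refine ⟨fun h u => congrFun (eq_of_forall_dft_two_mul_eq (φ := F) (φ' := Φ) (fun x => ?_)
    (fun x => ?_) h) u, fun h x => by rw [show F = Φ from funext h]⟩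
  · simp only [F]
    rw [show 2 * θ * (x + n) = 2 * θ * x by linear_combination θ * two_mul_natCast_half (n := n),
      add_natCast_half_add_natCast_half, mul_comm (g (x + n))]
  · simp only [Φ]
    rw [two_mul_add_natCast_half]


lemma gLevel_one_iff :
    (∀ s : ℕ, 1 ≤ s → s ≤ 2 * n / 2 - 1 → ∑ t ∈ range (2 * n),
        (-1 : ℂ) ^ t * g (t : ZMod (2 * n)) * g ((2 * (s : ℤ) - (t : ℤ) : ℤ) : ZMod (2 * n)) = 0) ↔
      ∀ x, 2 * x ≠ 0 → ∑ k, stdAddChar ((n : ZMod (2 * n)) * k) * (g k * g (2 * x - k)) = 0 := by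
  have := NeZero.pos n
  simp only [mul_assoc, Int.cast_sub, Int.cast_mul, Int.cast_natCast, Int.cast_ofNat]
  rw [Nat.mul_div_cancel_left n two_pos,
    ← forall_natCast_lt_iff fun x => by rw [two_mul_add_natCast_half]; exact id]
  refine forall_congr' fun s => ?_
  rw [sum_range_neg_one_pow_mul fun t => g t * g (2 * s - t)]
  refine ⟨fun h hs h2s => ?_, fun h hs1 hs2 => h (by omega) fun h2s => ?_⟩
  · exact h (Nat.one_le_iff_ne_zero.mpr fun hs0 => h2s (by simp [hs0])) (by omega)
  · rcases two_mul_eq_zero_iff.mp h2s with h0 | h0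
    · rw [natCast_eq_zero_iff_of_lt (show s < 2 * n by omega)] at h0
      omega
    · rw [natCast_eq_half_iff_of_lt (by omega)] at h0
      omega

lemma gLevel_two_iff :
    (∀ s : ℕ, 1 ≤ s → s ≤ 2 * n / 2 →
        g (s : ZMod (2 * n)) * g ((2 * n - s : ℕ) : ZMod (2 * n)) = (-1 : ℂ) ^ s) ↔
      ∀ x ≠ 0, g x * g (-x) = stdAddChar ((n : ZMod (2 * n)) * x) := by
  have := NeZero.pos n
  have hneg : ∀ s : ℕ, s ≤ n → ((2 * n - s : ℕ) : ZMod (2 * n)) = -s := fun s hs => by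
    rw [Nat.cast_sub (show s ≤ 2 * n by omega), ZMod.natCast_self, zero_sub]
  rw [Nat.mul_div_cancel_left n two_pos, ← forall_natCast_le_iff fun x h hx => by
    rw [mul_comm, ← neg_natCast_half_mul, ← mul_neg, ← h (neg_ne_zero.mpr hx), neg_neg]]
  refine forall_congr' fun s => ⟨fun h hs hs0 => ?_, fun h hs1 hs => ?_⟩
  · rw [Ne, natCast_eq_zero_iff_of_lt (show s < 2 * n by omega)] at hs0
    rw [← hneg s hs, h (Nat.one_le_iff_ne_zero.mpr hs0) hs, stdAddChar_half_mul_natCast]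
  · rw [hneg s hs, ← stdAddChar_half_mul_natCast (n := n)]
    exact h hs (by rw [Ne, natCast_eq_zero_iff_of_lt (show s < 2 * n by omega)]; omega)

lemma gLevel_three_iff (θ : ZMod (2 * n)) :
    (∀ s : ℕ, 1 ≤ s → s ≤ 2 * n / 2 - 1 →
        stdAddChar (2 * θ) ^ s * g (s : ZMod (2 * n)) * g ((2 * n / 2 + s : ℕ) : ZMod (2 * n))
          = g ((2 * s : ℕ) : ZMod (2 * n)) * g ((2 * n / 2 : ℕ) : ZMod (2 * n))) ↔
      ∀ u, stdAddChar (2 * θ * u) * (g u * g (u + n)) = g (2 * u) * g n := by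
  rw [Nat.mul_div_cancel_left n two_pos, ← forall_natCast_lt_iff fun x h => by
    rwa [show 2 * θ * (x + n) = 2 * θ * x by linear_combination θ * two_mul_natCast_half (n := n),
      add_natCast_half_add_natCast_half, two_mul_add_natCast_half, mul_comm (g (x + n))] at h]
  simp only [← AddChar.map_nsmul_eq_pow, nsmul_eq_mul, Nat.cast_add, Nat.cast_mul, Nat.cast_ofNat,
    mul_assoc, mul_comm _ (2 * θ), add_comm (n : ZMod (2 * n))]
  refine forall_congr' fun s => ⟨fun h hs => ?_, fun h hs1 hs2 => h (by omega)⟩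
  rcases Nat.eq_zero_or_pos s with rfl | hs0
  · simp
  · exact h hs0 (by omega)

theorem gLevel_iff (θ : ZMod (2 * n)) :
    GLevel (2 * n) g (stdAddChar (2 * θ)) ↔
      (∀ x, 2 * x ≠ 0 → ∑ k, stdAddChar ((n : ZMod (2 * n)) * k) * (g k * g (2 * x - k)) = 0) ∧
      (∀ x ≠ 0, g x * g (-x) = stdAddChar ((n : ZMod (2 * n)) * x)) ∧
      ∀ u, stdAddChar (2 * θ * u) * (g u * g (u + n)) = g (2 * u) * g n := by
  have h_pow : stdAddChar (2 * θ) ^ (2 * n / 2) = 1 := by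
    rw [Nat.mul_div_cancel_left n two_pos, ← AddChar.map_nsmul_eq_pow, nsmul_eq_mul, ← mul_assoc,
      mul_comm (n : ZMod (2 * n)), two_mul_natCast_half, zero_mul, AddChar.map_zero_eq_one]
  rw [GLevel, gLevel_one_iff, gLevel_two_iff, gLevel_three_iff, and_iff_left h_pow]

lemma ghatLevel_dft_one_iff :
    (∀ s : ℕ, s ≤ 2 * n / 2 - 1 →
        ((2 * n : ℕ) : ℂ) ^ 2 * 𝓕 g (s : ZMod (2 * n)) * 𝓕 g ((2 * n / 2 + s : ℕ) : ZMod (2 * n)) =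
          (∑ t ∈ range (2 * n), 𝓕 g (t : ZMod (2 * n))) ^ 2 +
            ((2 * n : ℕ) : ℂ) ^ 2 * (((2 * n : ℕ) : ℂ) - 1)) ↔
      ∀ x, 𝓕 g x * 𝓕 g (x + n) = g 0 ^ 2 + ((2 * n : ℕ) - 1) := by
  have := NeZero.pos n
  have hN : ((2 * n : ℕ) : ℂ) ≠ 0 := Nat.cast_ne_zero.mpr (NeZero.ne _)
  rw [sum_range_dft, Nat.mul_div_cancel_left n two_pos, ← forall_natCast_lt_iff fun x h => by
    rwa [add_natCast_half_add_natCast_half, mul_comm] at h]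
  simp only [Nat.cast_add, add_comm (n : ZMod (2 * n))]
  refine forall_congr' fun s => ⟨fun h hs => ?_, fun h hs => ?_⟩
  · apply mul_left_cancel₀ (pow_ne_zero 2 hN)
    linear_combination h (by omega)
  · linear_combination ((2 * n : ℕ) : ℂ) ^ 2 * h (by omega)

lemma ghatLevel_dft_two_iff :
    (∀ s : ℕ, s ≤ 2 * n / 2 - 1 →
        ((2 * n : ℕ) : ℂ) * ∑ t ∈ range (2 * n),
            𝓕 g (t : ZMod (2 * n)) * 𝓕 g ((s + t : ℕ) : ZMod (2 * n)) =
          (∑ t ∈ range (2 * n), 𝓕 g (t : ZMod (2 * n))) ^ 2 - ((2 * n : ℕ) : ℂ) ^ 2) ↔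
      ∀ d ≠ (n : ZMod (2 * n)), ∑ t, 𝓕 g t * 𝓕 g (t + d) = (2 * n : ℕ) * (g 0 ^ 2 - 1) := by
  have := NeZero.pos n
  have hN : ((2 * n : ℕ) : ℂ) ≠ 0 := Nat.cast_ne_zero.mpr (NeZero.ne _)
  have hneg : ∀ d : ZMod (2 * n), ∑ t, 𝓕 g t * 𝓕 g (t + -d) = ∑ t, 𝓕 g t * 𝓕 g (t + d) :=
    fun d => by
      rw [← Equiv.sum_comp (Equiv.addRight d)]
      simp only [Equiv.coe_addRight, add_neg_cancel_right]
      exact sum_congr rfl fun t _ => mul_comm _ _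
  rw [sum_range_dft, Nat.mul_div_cancel_left n two_pos,
    ← forall_natCast_le_iff (P := fun d => d ≠ n → _) fun x h hx => by
      rw [← hneg]
      exact h fun h' => hx (by rw [← neg_neg x, h', neg_natCast_half])]
  refine forall_congr' fun s => ?_
  simp only [Nat.cast_add, add_comm (s : ZMod (2 * n))]
  rw [sum_range_natCast fun t => 𝓕 g t * 𝓕 g (t + s)]
  refine ⟨fun h hs hsn => ?_, fun h hs => ?_⟩
  · rw [Ne, natCast_eq_half_iff_of_lt (show s < 2 * n by omega)] at hsn
    apply mul_left_cancel₀ hN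
    linear_combination h (by omega)
  · have hsn : (s : ZMod (2 * n)) ≠ n := by
      rw [Ne, natCast_eq_half_iff_of_lt (show s < 2 * n by omega)]
      omega
    linear_combination ((2 * n : ℕ) : ℂ) * h (by omega) hsn

lemma ghatLevel_dft_three_iff (θ : ℕ) :
    (∀ s : ℕ, s ≤ 2 * n / 2 - 1 →
        ∑ t ∈ range (2 * n), (-1 : ℂ) ^ t * 𝓕 g (t : ZMod (2 * n)) *
            𝓕 g ((2 * (s : ℤ) - 2 * (θ : ℤ) - (t : ℤ) : ℤ) : ZMod (2 * n)) =
          (𝓕 g (s : ZMod (2 * n)) + 𝓕 g ((2 * n / 2 + s : ℕ) : ZMod (2 * n))) *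
            ∑ t ∈ range (2 * n), (-1 : ℂ) ^ t * 𝓕 g (t : ZMod (2 * n))) ↔
      ∀ x, ∑ t, stdAddChar ((n : ZMod (2 * n)) * t) * (𝓕 g t * 𝓕 g (2 * x - 2 * θ - t)) =
        (2 * n : ℕ) * ((𝓕 g x + 𝓕 g (x + n)) * g n) := by
  have := NeZero.pos n
  simp only [mul_assoc, Int.cast_sub, Int.cast_mul, Int.cast_natCast, Int.cast_ofNat,
    sum_range_neg_one_pow_mul (𝓕 g), sum_stdAddChar_mul_dft]
  rw [Nat.mul_div_cancel_left n two_pos, ← forall_natCast_lt_iff fun x h => by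
    rwa [two_mul_add_natCast_half, add_natCast_half_add_natCast_half, add_comm (𝓕 g (x + n))] at h]
  refine forall_congr' fun s => ?_
  rw [sum_range_neg_one_pow_mul fun t => 𝓕 g t * 𝓕 g (2 * s - 2 * θ - t), Nat.cast_add,
    add_comm (n : ZMod (2 * n))]
  refine ⟨fun h hs => ?_, fun h hs => ?_⟩
  · linear_combination h (by omega)
  · linear_combination h (by omega)

theorem ghatLevel_dft_iff (θ : ℕ) :
    GhatLevel (2 * n) θ (𝓕 g) ↔
      (∀ x, 𝓕 g x * 𝓕 g (x + n) = g 0 ^ 2 + ((2 * n : ℕ) - 1)) ∧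
      (∀ d ≠ (n : ZMod (2 * n)), ∑ t, 𝓕 g t * 𝓕 g (t + d) = (2 * n : ℕ) * (g 0 ^ 2 - 1)) ∧
      ∀ x, ∑ t, stdAddChar ((n : ZMod (2 * n)) * t) * (𝓕 g t * 𝓕 g (2 * x - 2 * θ - t)) =
        (2 * n : ℕ) * ((𝓕 g x + 𝓕 g (x + n)) * g n) := by
  rw [GhatLevel, ghatLevel_dft_one_iff, ghatLevel_dft_two_iff, ghatLevel_dft_three_iff]

end Conditions

theorem ghatLevel_dft_iff_gLevel {n : ℕ} [NeZero n] (g : ZMod (2 * n) → ℂ) (θ : ℕ) :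
    GhatLevel (2 * n) θ (𝓕 g) ↔
      GLevel (2 * n) g (Complex.exp (2 * Real.pi * Complex.I / n) ^ θ) := by
  rw [← stdAddChar_two_mul_natCast, ghatLevel_dft_iff, gLevel_iff, dft_twist_condition_iff,
    ← and_assoc, dft_correlation_conditions_iff, and_assoc]

theorem stmt12 (m : ℕ) (hm : 0 < m) (heven : Even m) :
    Set.BijOn
      (fun p : ℕ × (ZMod m → ℂ) =>
        ((fun s : ZMod m =>
            (1 / (m : ℂ)) *
              ∑ t ∈ Finset.range m,
                Complex.exp (2 * Real.pi * Complex.I / m) ^ (s.val * t) * p.2 (t : ZMod m),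
          Complex.exp (2 * Real.pi * Complex.I / ((m / 2 : ℕ) : ℂ)) ^ p.1) :
          (ZMod m → ℂ) × ℂ))
      {p : ℕ × (ZMod m → ℂ) | p.1 ≤ m / 2 - 1 ∧ GhatLevel m p.1 p.2}
      {p : (ZMod m → ℂ) × ℂ | GLevel m p.1 p.2} := by
  obtain ⟨n, rfl⟩ := heven.two_dvd
  have : NeZero n := ⟨by omega⟩
  have hn : 2 * n / 2 = n := Nat.mul_div_cancel_left n two_pos
  have hζ := Complex.isPrimitiveRoot_exp n (NeZero.ne n)
  refine Set.BijOn.congr (f₁ := fun p => (𝓕⁻ p.2, Complex.exp (2 * Real.pi * Complex.I / n) ^ p.1))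
    ⟨?_, ?_, ?_⟩ fun p _ => ?_
  · rintro ⟨θ, G⟩ ⟨-, hG⟩
    exact (ghatLevel_dft_iff_gLevel _ θ).mp (by rwa [LinearEquiv.apply_symm_apply])
  · rintro ⟨θ₁, G₁⟩ ⟨hθ₁, -⟩ ⟨θ₂, G₂⟩ ⟨hθ₂, -⟩ h
    simp only [Prod.mk.injEq] at h
    rw [hζ.pow_inj (by omega) (by omega) h.2, dft.symm.injective h.1]
  · rintro ⟨g, h⟩ hL
    obtain ⟨θ, hθ, rfl⟩ := hζ.eq_pow_of_pow_eq_one (by simpa [hn] using hL.2.2.2)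
    refine ⟨(θ, 𝓕 g), ⟨by omega, (ghatLevel_dft_iff_gLevel g θ).mpr hL⟩, ?_⟩
    simp
  · exact Prod.ext (funext fun s => invDFT_apply_eq_sum_range p.2 s) (by simp only [hn])
end
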